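/- (Decomposition theorem of subword complexes, first part.) Let I be a facet of the subword complex SC(Q,π) of a (possibly infinite) Coxeter system (W,S), and let F be a flat of r(I,Q). Then F is the root function of the subword complex SC(Q_F,π_F) of type W_F with respect to the facet I_F: writing r_F for the root function of SC(Q_F,π_F) over the Coxeter system (W_F,Δ_F), one has r_F(I_F,k) = r(I,j_k) for every k ∈ [r']. -/

import Mathlib

noncomputable section
open Classical

/-- A Coxeter group together with the data of its geometric representation:
the group `W` with distinguished generators indexed by `B`, acting on a real
vector space `V`, with simple roots `alpha`, a set of positive roots `pos`,
an invariant bilinear form `form`, and an assignment `refl` of reflections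
to roots.  The axioms of such a system are collected in `GCS.IsGood`. -/
structure GCS : Type 1 where
  B : Type
  W : Type
  [grp : Group W]
  V : Type
  [acg : AddCommGroup V]
  [mod : Module ℝ V]
  s : B → W
  act : W → V → V
  alpha : B → V
  pos : Set V
  form : V → V → ℝ
  refl : V → W

attribute [instance] GCS.grp GCS.acg GCS.mod

namespace GCS

/-- The root system `Φ`: the orbit of the simple roots. -/
def Phi (c : GCS) : Set c.V := {v | ∃ w b, c.act w (c.alpha b) = v}

/-- The axioms of a geometric representation of a Coxeter system. -/
structure IsGood (c : GCS) : Prop where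
  s_sq : ∀ b, c.s b * c.s b = 1
  act_one : ∀ v, c.act 1 v = v
  act_mul : ∀ g h v, c.act (g * h) v = c.act g (c.act h v)
  act_add : ∀ g u v, c.act g (u + v) = c.act g u + c.act g v
  act_smul : ∀ g (a : ℝ) v, c.act g (a • v) = a • c.act g v
  act_s : ∀ b v, c.act (c.s b) v = v - (2 * c.form (c.alpha b) v) • c.alpha b
  form_symm : ∀ u v, c.form u v = c.form v u
  form_linear : ∀ (a : ℝ) u u' v, c.form (a • u + u') v = a * c.form u v + c.form u' v
  form_inv : ∀ w u v, c.form (c.act w u) (c.act w v) = c.form u v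
  form_alpha : ∀ b, c.form (c.alpha b) (c.alpha b) = 1
  alpha_pos : ∀ b, c.alpha b ∈ c.pos
  alpha_indep : LinearIndependent ℝ c.alpha
  root_pos_xor : ∀ v ∈ c.Phi, Xor' (v ∈ c.pos) (-v ∈ c.pos)
  refl_eq : ∀ w b, c.refl (c.act w (c.alpha b)) = w * c.s b * w⁻¹
  act_faithful : ∀ g, (∀ v, c.act g v = v) → g = 1
  generates : Subgroup.closure (Set.range c.s) = ⊤

/-- Product of the images of the letters of a word, in order. -/
def gprod (c : GCS) {T : Type*} (gens : T → c.W) (l : List T) : c.W := (l.map gens).prod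

/-- A word is reduced (w.r.t. a generating family) if no shorter word in the
same generators has the same product. -/
def Reduced (c : GCS) {T : Type*} (gens : T → c.W) (l : List T) : Prop :=
  ∀ l' : List T, gprod c gens l' = gprod c gens l → l.length ≤ l'.length

/-- The list of the positions of `X`, in increasing order. -/
def posList {r : ℕ} (X : Finset (Fin r)) : List (Fin r) :=
  (List.finRange r).filter (fun k => k ∈ X)

/-- The subword of `q` at the positions of `X`, in increasing order. -/
def swAt {r : ℕ} {T : Type*} (q : Fin r → T) (X : Finset (Fin r)) : List T :=
  (posList X).map q

/-- `I` is a face of the subword complex `SC(Q, π)`: the complement of `I`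
contains a reduced expression of `π`. -/
def IsFace (c : GCS) {T : Type*} (gens : T → c.W) {r : ℕ} (q : Fin r → T) (π : c.W)
    (I : Finset (Fin r)) : Prop :=
  ∃ J : Finset (Fin r), Disjoint J I ∧ Reduced c gens (swAt q J) ∧ gprod c gens (swAt q J) = π

/-- `I` is a facet (maximal face) of the subword complex `SC(Q, π)`. -/
def IsFacet (c : GCS) {T : Type*} (gens : T → c.W) {r : ℕ} (q : Fin r → T) (π : c.W)
    (I : Finset (Fin r)) : Prop :=
  IsFace c gens q π I ∧ ∀ I' : Finset (Fin r), IsFace c gens q π I' → I ⊆ I' → I' = I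

/-- Positions before `j` in the complement of `I` (the set `A_j`). -/
def before {r : ℕ} (I : Finset (Fin r)) (j : Fin r) : Finset (Fin r) :=
  Finset.univ.filter (fun k => k < j ∧ k ∉ I)

/-- The root function of a subword complex (generic version, for any
generating family `gens` with associated simple roots `αT`). -/
def grootFn (c : GCS) {T : Type*} (gens : T → c.W) (αT : T → c.V) {n : ℕ}
    (q : Fin n → T) (I : Finset (Fin n)) (j : Fin n) : c.V :=
  c.act (gprod c gens (swAt q (before I j))) (αT (q j))

/-- The root function `r(I, ·)` of a subword complex. -/
def rootFn (c : GCS) {r : ℕ} (q : Fin r → c.B) (I : Finset (Fin r)) (j : Fin r) : c.V :=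
  grootFn c c.s c.alpha q I j

/-- `J` is (the set of positions of) a flat of the list of roots `r(I,Q)`:
the positions whose root lies in some linear subspace `U`. -/
def IsFlat (c : GCS) {r : ℕ} (q : Fin r → c.B) (I J : Finset (Fin r)) : Prop :=
  ∃ U : Submodule ℝ c.V, ∀ j : Fin r, j ∈ J ↔ rootFn c q I j ∈ U

/-- The span `V_F` of the roots of the flat. -/
def VF (c : GCS) {r : ℕ} (q : Fin r → c.B) (I J : Finset (Fin r)) : Submodule ℝ c.V :=
  Submodule.span ℝ ((fun j => rootFn c q I j) '' ↑J)

/-- The root subsystem `Φ_F = Φ ∩ V_F`. -/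
def PhiF (c : GCS) {r : ℕ} (q : Fin r → c.B) (I J : Finset (Fin r)) : Set c.V :=
  c.Phi ∩ ↑(VF c q I J)

/-- The positive roots `Φ_F⁺ = Φ⁺ ∩ V_F` of the root subsystem. -/
def PosF (c : GCS) {r : ℕ} (q : Fin r → c.B) (I J : Finset (Fin r)) : Set c.V :=
  c.pos ∩ PhiF c q I J

/-- `β` is a simple root of the root subsystem with positive roots `P`:
it is a positive root of the subsystem, and it is indecomposable, i.e. not a
positive linear combination of two other positive roots of the subsystem. -/
def IsSimpleIn (c : GCS) (P : Set c.V) (β : c.V) : Prop :=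
  β ∈ P ∧ ∀ γ₁ ∈ P, ∀ γ₂ ∈ P, γ₁ ≠ β → γ₂ ≠ β →
    ∀ a b : ℝ, 0 < a → 0 < b → β ≠ a • γ₁ + b • γ₂

/-- The set `Δ_F` of simple roots of the root subsystem `Φ_F`. -/
def DeltaF (c : GCS) {r : ℕ} (q : Fin r → c.B) (I J : Finset (Fin r)) : Set c.V :=
  {β | IsSimpleIn c (PosF c q I J) β}

/-- The `k`-th element `j_k` of `J` in increasing order. -/
def flatIdx {r : ℕ} (J : Finset (Fin r)) (k : Fin J.card) : Fin r :=
  ((J.orderIsoOfFin rfl) k : {x // x ∈ J})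

/-- Positions before `j` outside of `I` and outside of the flat `J`
(the set `B_j`). -/
def beforeF {r : ℕ} (I J : Finset (Fin r)) (j : Fin r) : Finset (Fin r) :=
  Finset.univ.filter (fun k => k < j ∧ k ∉ I ∧ k ∉ J)

/-- The roots `β_k = Q_{B_{j_k}}(α_{q_{j_k}})`. -/
def betaF (c : GCS) {r : ℕ} (q : Fin r → c.B) (I J : Finset (Fin r)) (k : Fin J.card) : c.V :=
  c.act (gprod c c.s (swAt q (beforeF I J (flatIdx J k)))) (c.alpha (q (flatIdx J k)))

/-- The letters of the word `Q_F`: the `k`-th letter is the generator of `W_F`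
corresponding to the simple root `β_k`, i.e. the reflection `s_{β_k}`,
viewed inside the ambient group. -/
def qeltF (c : GCS) {r : ℕ} (q : Fin r → c.B) (I J : Finset (Fin r)) (k : Fin J.card) : c.W :=
  c.refl (betaF c q I J k)

/-- The subset `I_F ⊆ [r']` corresponding to `I`. -/
def IF {r : ℕ} (I J : Finset (Fin r)) : Finset (Fin J.card) :=
  Finset.univ.filter (fun k => flatIdx J k ∈ I)

/-- The element `π_F`: product of the letters of `Q_F` at the complement of `I_F`. -/
def piF (c : GCS) {r : ℕ} (q : Fin r → c.B) (I J : Finset (Fin r)) : c.W :=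
  gprod c (qeltF c q I J) (swAt (fun k => k) (IF I J)ᶜ)

end GCS

/-! Read the prefix `Q_{A_{j_k}}` from left to right and push every letter at a position
`p = j_i` of the flat to the front. It passes the letters outside `I` and outside the flat that
precede it, so it turns into its conjugate `Q_{B_p} s_{q_p} Q_{B_p}⁻¹ = s_{β_i}`, the `i`-th
letter of `Q_F` (this is where `s_{w(α)} = w s_α w⁻¹` enters). Hence
`Q_{A_{j_k}} = (Q_F)_{A'_k} · Q_{B_{j_k}}`, where `A'_k = [k-1] ∖ I_F`, and applying this to
`α_{q_{j_k}}` gives `r(I, j_k) = (Q_F)_{A'_k}(β_k) = r_F(I_F, k)`. -/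

theorem List.Pairwise.prod_map_eq_prod_conj_mul {α G : Type*} [LinearOrder α] [Group G]
    (f : α → G) (P : α → Prop) [DecidablePred P] {l : List α} (hl : l.Pairwise (· < ·)) :
    (l.map f).prod =
      ((l.filter P).map fun p =>
          MulAut.conj (((l.filter fun x => x < p ∧ ¬P x).map f).prod) (f p)).prod *
        ((l.filter fun x => ¬P x).map f).prod := by
  induction l using List.reverseRecOn with
  | nil => simp
  | append_singleton t p ih =>
    obtain ⟨ht, -, hlast⟩ := List.pairwise_append.1 hl
    have hlt : ∀ x ∈ t, x < p := fun x hx => hlast x hx p (List.mem_singleton_self p)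
    have hprefix : ∀ x ∈ t, (t ++ [p]).filter (fun y => y < x ∧ ¬P y)
        = t.filter (fun y => y < x ∧ ¬P y) := by
      intro x hx
      simp [List.filter_append, (hlt x hx).not_gt]
    have hprefix_p : (t ++ [p]).filter (fun y => y < p ∧ ¬P y) = t.filter (fun y => ¬P y) := by
      rw [List.filter_append, List.filter_singleton]
      simp only [lt_irrefl, false_and, decide_false, cond_false, List.append_nil]
      exact List.filter_congr fun x hx => by simp [hlt x hx]
    have hconj : (t.filter P).map (fun x => MulAut.conj
          ((((t ++ [p]).filter fun y => y < x ∧ ¬P y).map f).prod) (f x))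
        = (t.filter P).map (fun x => MulAut.conj
          (((t.filter fun y => y < x ∧ ¬P y).map f).prod) (f x)) :=
      List.map_congr_left fun x hx => by rw [hprefix x (List.mem_of_mem_filter hx)]
    by_cases hp : P p
    · have hP : (t ++ [p]).filter P = t.filter P ++ [p] := by simp [hp]
      have hnP : (t ++ [p]).filter (fun x => ¬P x) = t.filter (fun x => ¬P x) := by simp [hp]
      simp only [hP, hnP, List.map_append, List.prod_append, List.map_singleton,
        List.prod_singleton]
      rw [hconj, hprefix_p, ih ht, MulAut.conj_apply]
      group
    · have hP : (t ++ [p]).filter P = t.filter P := by simp [hp]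
      have hnP : (t ++ [p]).filter (fun x => ¬P x) = t.filter (fun x => ¬P x) ++ [p] := by
        simp [hp]
      simp only [hP, hnP, hconj, List.map_append, List.prod_append, List.map_singleton,
        List.prod_singleton, ih ht, mul_assoc]

namespace GCS

variable {r : ℕ}

theorem gprod_swAt (c : GCS) {T : Type*} (gens : T → c.W) (q : Fin r → T) (X : Finset (Fin r)) :
    gprod c gens (swAt q X) = ((posList X).map (gens ∘ q)).prod := by
  rw [gprod, swAt, List.map_map]

theorem pairwise_posList (X : Finset (Fin r)) : (posList X).Pairwise (· < ·) :=
  (List.pairwise_lt_finRange r).filter _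

theorem mem_posList {X : Finset (Fin r)} {x : Fin r} : x ∈ posList X ↔ x ∈ X := by
  simp [posList]

theorem posList_filter (X : Finset (Fin r)) (P : Fin r → Prop) [DecidablePred P] :
    (posList X).filter P = posList (X.filter P) := by
  simp only [posList, List.filter_filter, Finset.mem_filter]
  exact List.filter_congr fun x _ => by simp [and_comm]

theorem before_filter_not_mem (I J : Finset (Fin r)) (j : Fin r) :
    (before I j).filter (· ∉ J) = beforeF I J j := by
  ext x
  simp [before, beforeF, and_assoc]

theorem before_filter_lt_not_mem (I J : Finset (Fin r)) {p j : Fin r} (hpj : p < j) :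
    (before I j).filter (fun x => x < p ∧ x ∉ J) = beforeF I J p := by
  ext x
  simp only [before, beforeF, Finset.mem_filter, Finset.mem_univ, true_and]
  exact ⟨fun ⟨⟨_, hxI⟩, hxp, hxJ⟩ => ⟨hxp, hxI, hxJ⟩,
    fun ⟨hxp, hxI, hxJ⟩ => ⟨⟨hxp.trans hpj, hxI⟩, hxp, hxJ⟩⟩

theorem gprod_before_eq_prod_conj_mul (c : GCS) (q : Fin r → c.B) (I J : Finset (Fin r))
    (j : Fin r) :
    gprod c c.s (swAt q (before I j)) =
      ((posList ((before I j).filter (· ∈ J))).map fun p =>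
          MulAut.conj (gprod c c.s (swAt q (beforeF I J p))) (c.s (q p))).prod *
        gprod c c.s (swAt q (beforeF I J j)) := by
  rw [gprod_swAt, (pairwise_posList _).prod_map_eq_prod_conj_mul _ (· ∈ J), posList_filter,
    posList_filter, before_filter_not_mem, gprod_swAt]
  congr 2
  refine List.map_congr_left fun p hp => ?_
  obtain ⟨⟨hpj, -⟩, -⟩ : (p < j ∧ p ∉ I) ∧ p ∈ J := by simpa [before] using mem_posList.1 hp
  rw [posList_filter, before_filter_lt_not_mem I J hpj, gprod_swAt]
  rfl

theorem qeltF_eq_conj {c : GCS} (hc : c.IsGood) (q : Fin r → c.B) (I J : Finset (Fin r))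
    (k : Fin J.card) :
    qeltF c q I J k = MulAut.conj (gprod c c.s (swAt q (beforeF I J (flatIdx J k))))
      (c.s (q (flatIdx J k))) := by
  rw [qeltF, betaF, hc.refl_eq, MulAut.conj_apply]

theorem map_flatIdx_posList_before_IF (I J : Finset (Fin r)) (k : Fin J.card) :
    (posList (before (IF I J) k)).map (flatIdx J) =
      posList ((before I (flatIdx J k)).filter (· ∈ J)) := by
  have hmono : StrictMono (flatIdx J) := (J.orderEmbOfFin rfl).strictMono
  refine ((pairwise_posList _).map (flatIdx J) fun _ _ h => hmono h).eq_of_mem_iff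
    (pairwise_posList _) fun x => ?_
  simp only [List.mem_map, mem_posList, before, IF, Finset.mem_filter, Finset.mem_univ,
    true_and]
  constructor
  · rintro ⟨i, ⟨hik, hiI⟩, rfl⟩
    exact ⟨⟨hmono hik, hiI⟩, J.orderEmbOfFin_mem rfl i⟩
  · rintro ⟨⟨hxk, hxI⟩, hxJ⟩
    obtain ⟨i, rfl⟩ : x ∈ Set.range (flatIdx J) := by
      rwa [show flatIdx J = J.orderEmbOfFin rfl from rfl, Finset.range_orderEmbOfFin]
    exact ⟨i, ⟨hmono.lt_iff_lt.1 hxk, hxI⟩, rfl⟩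

end GCS

open GCS in
theorem decomposition_theorem_root_function_general
    (c : GCS) (hgood : c.IsGood) {r : ℕ} (q : Fin r → c.B)
    (I : Finset (Fin r))
    (J : Finset (Fin r)) :
    ∀ k : Fin J.card,
      grootFn c (qeltF c q I J) (betaF c q I J) (fun k => k) (IF I J) k
        = rootFn c q I (flatIdx J k) := by
  intro k
  rw [rootFn, grootFn, grootFn, gprod_before_eq_prod_conj_mul c q I J, hgood.act_mul,
    ← map_flatIdx_posList_before_IF, List.map_map, gprod_swAt]
  congr 2
  exact List.map_congr_left fun i _ => qeltF_eq_conj hgood q I J i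

open GCS in
/-- Decomposition theorem of subword complexes (first part): given a facet `I`
of `SC(Q, π)` and a flat `F` (with set of positions `J = {j_1 < … < j_{r'}}`)
of `r(I,Q)`, the flat is the root function of the restricted subword complex
`SC(Q_F, π_F)` with respect to the facet `I_F`: for every `k ∈ [r']`,
`r_F(I_F, k) = r(I, j_k)`.  Here the root function `r_F` of `SC(Q_F, π_F)`
over the Coxeter system `(W_F, Δ_F)` is computed from the word `Q_F` (whose
`k`-th letter is the reflection corresponding to the simple root `β_k`). -/
theorem decomposition_theorem_root_function
    (c : GCS) (hgood : c.IsGood) {r : ℕ} (q : Fin r → c.B) (π : c.W)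
    (I : Finset (Fin r)) (hI : IsFacet c c.s q π I)
    (J : Finset (Fin r)) (hJ : IsFlat c q I J) :
    ∀ k : Fin J.card,
      grootFn c (qeltF c q I J) (betaF c q I J) (fun k => k) (IF I J) k
        = rootFn c q I (flatIdx J k) :=
  decomposition_theorem_root_function_general c hgood q I J
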